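/- Let x ∈ ℝ with x ≠ 0 and 3x² ≠ 1. Then the equation (2(2x²−1−x)(x−1)/(x(3x²−1)) − 3)² = 1 + 4(x−1)²(1−x²)/(3x²−1)² holds if and only if x ∈ {−1, (−1−√5)/2, (√5−1)/2, (1−√6)/5, (1+√6)/5}; equivalently, for such x the equation is equivalent to (x+1)²·(x−(−1−√5)/2)·(x−(√5−1)/2)·(x−(1−√6)/5)·(x−(1+√6)/5) = 0. -/

import Mathlib

/-! Clearing denominators, the difference of the two sides of the equation is
`4 (x+1)² (x²+x−1) (5x²−2x−1) / (x² (3x²−1)²)`, so the equation holds exactly when one of the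
three factors of the numerator vanishes; the two quadratic factors split over `ℚ(√5)` and `ℚ(√6)`. -/

open Real

lemma sub_mul_sub_golden_conj (x : ℝ) :
    (x - (-1 - √5) / 2) * (x - (√5 - 1) / 2) = x ^ 2 + x - 1 := by
  linear_combination (-1 / 4 : ℝ) * sq_sqrt (show (0 : ℝ) ≤ 5 by norm_num)

lemma five_mul_sub_mul_sub_sqrt_six (x : ℝ) :
    5 * ((x - (1 - √6) / 5) * (x - (1 + √6) / 5)) = 5 * x ^ 2 - 2 * x - 1 := by
  linear_combination (-1 / 5 : ℝ) * sq_sqrt (show (0 : ℝ) ≤ 6 by norm_num)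

lemma sq_add_sub_one_eq_zero_iff (x : ℝ) :
    x ^ 2 + x - 1 = 0 ↔ x = (-1 - √5) / 2 ∨ x = (√5 - 1) / 2 := by
  rw [← sub_mul_sub_golden_conj, mul_eq_zero, sub_eq_zero, sub_eq_zero]

lemma five_sq_sub_two_sub_one_eq_zero_iff (x : ℝ) :
    5 * x ^ 2 - 2 * x - 1 = 0 ↔ x = (1 - √6) / 5 ∨ x = (1 + √6) / 5 := by
  rw [← five_mul_sub_mul_sub_sqrt_six, mul_eq_zero, or_iff_right (by norm_num), mul_eq_zero,
    sub_eq_zero, sub_eq_zero]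

lemma landscape_equation_sub (x : ℝ) (hx : x ≠ 0) (hx3 : 3 * x ^ 2 - 1 ≠ 0) :
    (2 * (2*x^2 - 1 - x) * (x - 1) / (x * (3*x^2 - 1)) - 3)^2
        - (1 + 4 * (x - 1)^2 * (1 - x^2) / (3*x^2 - 1)^2)
      = 4 * ((x + 1) ^ 2 * (x ^ 2 + x - 1) * (5 * x ^ 2 - 2 * x - 1))
          / (x ^ 2 * (3 * x ^ 2 - 1) ^ 2) := by
  rw [div_sub' (mul_ne_zero hx hx3), div_pow, add_div' _ _ _ (pow_ne_zero 2 hx3),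
    div_sub_div _ _ (by positivity) (by positivity), div_eq_div_iff (by positivity) (by positivity)]
  ring

lemma landscape_equation_iff (x : ℝ) (hx : x ≠ 0) (hx3 : 3 * x ^ 2 ≠ 1) :
    (2 * (2*x^2 - 1 - x) * (x - 1) / (x * (3*x^2 - 1)) - 3)^2
        = 1 + 4 * (x - 1)^2 * (1 - x^2) / (3*x^2 - 1)^2
      ↔ (x + 1) ^ 2 * (x ^ 2 + x - 1) * (5 * x ^ 2 - 2 * x - 1) = 0 := by
  have hx3' : 3 * x ^ 2 - 1 ≠ 0 := sub_ne_zero.mpr hx3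
  rw [← sub_eq_zero, landscape_equation_sub x hx hx3', div_eq_zero_iff,
    or_iff_left (by positivity), mul_eq_zero, or_iff_right (by norm_num)]

theorem stmt13 (x : ℝ) (hx : x ≠ 0) (hx3 : 3 * x^2 ≠ 1) :
    ((2 * (2*x^2 - 1 - x) * (x - 1) / (x * (3*x^2 - 1)) - 3)^2
        = 1 + 4 * (x - 1)^2 * (1 - x^2) / (3*x^2 - 1)^2
      ↔ (x = -1 ∨ x = (-1 - Real.sqrt 5)/2 ∨ x = (Real.sqrt 5 - 1)/2
          ∨ x = (1 - Real.sqrt 6)/5 ∨ x = (1 + Real.sqrt 6)/5))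
    ∧ ((2 * (2*x^2 - 1 - x) * (x - 1) / (x * (3*x^2 - 1)) - 3)^2
        = 1 + 4 * (x - 1)^2 * (1 - x^2) / (3*x^2 - 1)^2
      ↔ (x + 1)^2 * (x - (-1 - Real.sqrt 5)/2) * (x - (Real.sqrt 5 - 1)/2)
          * (x - (1 - Real.sqrt 6)/5) * (x - (1 + Real.sqrt 6)/5) = 0) := by
  rw [landscape_equation_iff x hx hx3]
  have hfactor : (x + 1)^2 * (x - (-1 - √5)/2) * (x - (√5 - 1)/2)
      * (x - (1 - √6)/5) * (x - (1 + √6)/5)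
      = (x + 1) ^ 2 * (x ^ 2 + x - 1) * (5 * x ^ 2 - 2 * x - 1) / 5 := by
    rw [← sub_mul_sub_golden_conj, ← five_mul_sub_mul_sub_sqrt_six]
    ring
  refine ⟨?_, by rw [hfactor, div_eq_zero_iff, or_iff_left (by norm_num)]⟩
  rw [mul_eq_zero, mul_eq_zero, sq_add_sub_one_eq_zero_iff, five_sq_sub_two_sub_one_eq_zero_iff,
    pow_eq_zero_iff two_ne_zero, add_eq_zero_iff_eq_neg, or_assoc, or_assoc]
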